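/- Assume H is strictly convex (d_k > 0 for some finite k ≥ 2) and H'(μ¹) > 1, and let μ² = min{x ∈ [0,1] : H(x) − x = 1 − 2μ¹} (so μ² < μ¹). Then for every starting value x_0 ∈ [0, μ¹), the sequence defined by x_{k+1} = 1 − 2H(μ¹) + H(x_k) = 2μ¹ − 1 + H(x_k) converges to μ² as k → ∞. -/

import Mathlib

/-!
Write `c = 1 - 2μ¹`, `ψ(x) = H(x) - x` and `f(x) = 2μ¹ - 1 + H(x)`, so that the fixed points of
`f` are the roots of `ψ = c`, one of which is `μ¹`. The function `ψ` is strictly convex. Since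
`H'(μ¹) > 1`, `ψ < c` just to the left of `μ¹`, while `ψ(0) = 0 ≥ c` because `H(μ¹) < μ¹`; hence
`ψ = c` has a root below `μ¹`, i.e. `μ² < μ¹`. Strict convexity then gives `ψ > c` on `[0, μ²)` and
`ψ < c` on `(μ², μ¹)`, i.e. `f(x) > x` below `μ²` and `f(x) < x` between `μ²` and `μ¹`. As `f` is
increasing, the orbit is monotone, stays on its side of `μ²`, and converges to a fixed point of `f`
on that side, which can only be `μ²`.
-/

open MeasureTheory ProbabilityTheory Filter Topology

/-- The generating function `H(x) = ∑_{k≥1} d_k x^k` (we use `d : ℕ → ℝ` with `d 0 = 0`). -/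
noncomputable def genFun (d : ℕ → ℝ) (x : ℝ) : ℝ := ∑' k, d k * x ^ k

/-- The derivative `H'(x) = ∑_{k≥1} k d_k x^(k-1)`. -/
noncomputable def genFunDeriv (d : ℕ → ℝ) (x : ℝ) : ℝ :=
  ∑' k : ℕ, ((k : ℝ) + 1) * d (k + 1) * x ^ k

open Set

lemma sub_mul_pow_le_pow_sub_pow {s t : ℝ} (ht : 0 ≤ t) (hts : t ≤ s) (n : ℕ) :
    (s - t) * ((n + 1) * t ^ n) ≤ s ^ (n + 1) - t ^ (n + 1) := by
  induction n with
  | zero => simp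
  | succ n ih =>
    have hn : 0 ≤ (s - t) * ((n + 1) * t ^ n) :=
      mul_nonneg (sub_nonneg.2 hts) (mul_nonneg n.cast_add_one_pos.le (pow_nonneg ht n))
    calc (s - t) * ((↑(n + 1) + 1) * t ^ (n + 1))
        = t * ((s - t) * ((n + 1) * t ^ n)) + (s - t) * t ^ (n + 1) := by push_cast; ring
      _ ≤ s * (s ^ (n + 1) - t ^ (n + 1)) + (s - t) * t ^ (n + 1) :=
        add_le_add_left ((mul_le_mul_of_nonneg_right hts hn).trans
          (mul_le_mul_of_nonneg_left ih (ht.trans hts))) _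
      _ = s ^ (n + 1 + 1) - t ^ (n + 1 + 1) := by ring

section StrictConvex

variable {s : Set ℝ} {f : ℝ → ℝ} {t x y : ℝ}

lemma StrictConvexOn.map_lt_of_mem_Ioo_of_map_eq (hf : StrictConvexOn ℝ s f) (hx : x ∈ s)
    (hy : y ∈ s) (hfxy : f x = f y) (ht : t ∈ Ioo x y) : f t < f x := by
  have := hf.lt_on_openSegment hx hy (ne_of_lt (ht.1.trans ht.2))
    ((openSegment_eq_Ioo (ht.1.trans ht.2)).symm ▸ ht)
  rwa [← hfxy, max_self] at this

lemma StrictConvexOn.map_lt_of_lt_of_map_eq (hf : StrictConvexOn ℝ s f) (ht : t ∈ s)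
    (hy : y ∈ s) (htx : t < x) (hxy : x < y) (hfxy : f x = f y) : f x < f t := by
  have := hf.slope_strict_mono_adjacent ht hy htx hxy
  rwa [← hfxy, sub_self, zero_div, div_lt_iff₀ (sub_pos.2 htx), zero_mul, sub_neg] at this

end StrictConvex

section Orbit

variable {α : Type*} [ConditionallyCompleteLinearOrder α] [TopologicalSpace α] [OrderTopology α]
  {f : α → α} {a p : α} {x : ℕ → α}

lemma tendsto_orbit_of_lt_map (hmono : MonotoneOn f (Icc a p)) (hcont : ContinuousOn f (Icc a p))
    (hfix : f p = p) (hlt : ∀ t ∈ Ico a p, t < f t) (hx0 : x 0 ∈ Icc a p)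
    (hx : ∀ k, x (k + 1) = f (x k)) : Tendsto x atTop (𝓝 p) := by
  have hle : ∀ t ∈ Icc a p, t ≤ f t := fun t ht =>
    ht.2.lt_or_eq.elim (fun h => (hlt t ⟨ht.1, h⟩).le) (fun h => h ▸ hfix.ge)
  have hmem : ∀ k, x k ∈ Icc a p := by
    intro k
    induction k with
    | zero => exact hx0
    | succ k ih =>
      rw [hx k]
      exact ⟨ih.1.trans (hle _ ih), hfix ▸ hmono ih (right_mem_Icc.2 (ih.1.trans ih.2)) ih.2⟩
  have hmonox : Monotone x := monotone_nat_of_le_succ fun k => hx k ▸ hle _ (hmem k)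
  have hlim := tendsto_atTop_ciSup hmonox ⟨p, forall_mem_range.2 fun k => (hmem k).2⟩
  set L := ⨆ k, x k
  have hL : L ∈ Icc a p := isClosed_Icc.mem_of_tendsto hlim (Eventually.of_forall hmem)
  have hfixL : f L = L := by
    refine tendsto_nhds_unique ?_ ((tendsto_add_atTop_iff_nat 1).2 hlim)
    simp_rw [hx]
    exact (hcont L hL).tendsto.comp (tendsto_nhdsWithin_iff.2 ⟨hlim, Eventually.of_forall hmem⟩)
  obtain rfl : L = p := hL.2.eq_or_lt.resolve_right fun h => (hlt L ⟨hL.1, h⟩).ne' hfixL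
  exact hlim

lemma tendsto_orbit_of_map_lt {b : α} (hmono : MonotoneOn f (Icc p b))
    (hcont : ContinuousOn f (Icc p b)) (hfix : f p = p) (hlt : ∀ t ∈ Ioc p b, f t < t)
    (hx0 : x 0 ∈ Icc p b) (hx : ∀ k, x (k + 1) = f (x k)) : Tendsto x atTop (𝓝 p) := by
  have hI : Icc (OrderDual.toDual b) (OrderDual.toDual p) = OrderDual.ofDual ⁻¹' Icc p b :=
    Icc_toDual
  exact tendsto_orbit_of_lt_map (a := OrderDual.toDual b) (p := OrderDual.toDual p)
    (hI ▸ hmono.dual) (hI ▸ hcont) hfix (fun t ht => hlt t ⟨ht.2, ht.1⟩) ⟨hx0.2, hx0.1⟩ hx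

end Orbit

section GenFun

variable {d : ℕ → ℝ}

lemma genFun_zero (hd0 : d 0 = 0) : genFun d 0 = 0 := by
  rw [genFun, tsum_eq_single 0 fun k hk => by simp [hk]]
  simp [hd0]

lemma summable_genFun (hdnn : ∀ k, 0 ≤ d k) (hdsum : Summable d) {x : ℝ} (hx : x ∈ Icc 0 1) :
    Summable fun k => d k * x ^ k :=
  hdsum.of_nonneg_of_le (fun k => mul_nonneg (hdnn k) (pow_nonneg hx.1 k))
    fun k => mul_le_of_le_one_right (hdnn k) (pow_le_one₀ hx.1 hx.2)

lemma genFun_monotoneOn (hdnn : ∀ k, 0 ≤ d k) (hdsum : Summable d) :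
    MonotoneOn (genFun d) (Icc 0 1) := fun _ hx _ hy hxy =>
  (summable_genFun hdnn hdsum hx).tsum_le_tsum
    (fun k => mul_le_mul_of_nonneg_left (pow_le_pow_left₀ hx.1 hxy k) (hdnn k))
    (summable_genFun hdnn hdsum hy)

lemma genFun_continuousOn (hdnn : ∀ k, 0 ≤ d k) (hdsum : Summable d) :
    ContinuousOn (genFun d) (Icc 0 1) :=
  continuousOn_tsum (fun k => (continuous_const.mul (continuous_pow k)).continuousOn) hdsum
    fun k x hx => by
      rw [norm_mul, norm_pow, Real.norm_of_nonneg (hdnn k), Real.norm_of_nonneg hx.1]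
      exact mul_le_of_le_one_right (hdnn k) (pow_le_one₀ hx.1 hx.2)

lemma genFun_strictConvexOn (hdnn : ∀ k, 0 ≤ d k) (hdsum : Summable d)
    (hconv : ∃ k : ℕ, 2 ≤ k ∧ 0 < d k) : StrictConvexOn ℝ (Icc 0 1) (genFun d) := by
  obtain ⟨k₀, hk₀, hdk₀⟩ := hconv
  refine ⟨convex_Icc 0 1, fun x hx y hy hxy a b ha hb hab => ?_⟩
  have hx' : x ∈ Ici 0 := hx.1
  have hy' : y ∈ Ici 0 := hy.1
  have hterm : ∀ k, d k * (a • x + b • y) ^ k ≤ a * (d k * x ^ k) + b * (d k * y ^ k) :=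
    fun k => by
      have := mul_le_mul_of_nonneg_left ((convexOn_pow k).2 hx' hy' ha.le hb.le hab) (hdnn k)
      simp only [smul_eq_mul] at this ⊢
      linarith
  have hterm₀ : d k₀ * (a • x + b • y) ^ k₀ < a * (d k₀ * x ^ k₀) + b * (d k₀ * y ^ k₀) := by
    have := mul_lt_mul_of_pos_left ((strictConvexOn_pow hk₀).2 hx' hy' hxy ha hb hab) hdk₀
    simp only [smul_eq_mul] at this ⊢
    linarith
  have hsx := summable_genFun hdnn hdsum hx
  have hsy := summable_genFun hdnn hdsum hy
  calc genFun d (a • x + b • y)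
      < ∑' k, (a * (d k * x ^ k) + b * (d k * y ^ k)) :=
        (summable_genFun hdnn hdsum ((convex_Icc 0 1) hx hy ha.le hb.le hab)).tsum_lt_tsum
          hterm hterm₀ ((hsx.mul_left a).add (hsy.mul_left b))
    _ = a • genFun d x + b • genFun d y := by
        rw [(hsx.mul_left a).tsum_add (hsy.mul_left b), tsum_mul_left, tsum_mul_left]
        rfl

lemma genFun_lt_self (hd0 : d 0 = 0) (hdnn : ∀ k, 0 ≤ d k) (hdsum : Summable d)
    (hdle : ∑' k, d k ≤ 1) (hconv : ∃ k : ℕ, 2 ≤ k ∧ 0 < d k) {x : ℝ} (hx : x ∈ Ioo 0 1) :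
    genFun d x < x := by
  have h := (genFun_strictConvexOn hdnn hdsum hconv).2 (left_mem_Icc.2 zero_le_one)
    (right_mem_Icc.2 zero_le_one) zero_ne_one (sub_pos.2 hx.2) hx.1 (sub_add_cancel 1 x)
  have hone : genFun d 1 = ∑' k, d k := by simp [genFun]
  simp only [smul_eq_mul, mul_zero, mul_one, zero_add, genFun_zero hd0, hone] at h
  exact h.trans_le (mul_le_of_le_one_right hx.1.le hdle)

lemma genFunDeriv_continuousOn (hdnn : ∀ k, 0 ≤ d k) {μ : ℝ}
    (hsum : Summable fun k : ℕ => ((k : ℝ) + 1) * d (k + 1) * μ ^ k) :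
    ContinuousOn (genFunDeriv d) (Icc 0 μ) :=
  continuousOn_tsum (fun k => (continuous_const.mul (continuous_pow k)).continuousOn) hsum
    fun k t ht => by
      have hc : 0 ≤ ((k : ℝ) + 1) * d (k + 1) := mul_nonneg k.cast_add_one_pos.le (hdnn _)
      rw [norm_mul, norm_pow, Real.norm_of_nonneg hc, Real.norm_of_nonneg ht.1]
      exact mul_le_mul_of_nonneg_left (pow_le_pow_left₀ ht.1 ht.2 k) hc

lemma sub_mul_genFunDeriv_le (hdnn : ∀ k, 0 ≤ d k) (hdsum : Summable d) {t μ : ℝ}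
    (ht : 0 ≤ t) (htμ : t ≤ μ) (hμ : μ ≤ 1)
    (hsum : Summable fun k : ℕ => ((k : ℝ) + 1) * d (k + 1) * t ^ k) :
    (μ - t) * genFunDeriv d t ≤ genFun d μ - genFun d t := by
  have hsμ := summable_genFun hdnn hdsum ⟨ht.trans htμ, hμ⟩
  have hst := summable_genFun hdnn hdsum ⟨ht, htμ.trans hμ⟩
  have hdiff := hsμ.sub hst
  calc (μ - t) * genFunDeriv d t
      = ∑' k : ℕ, (μ - t) * ((k + 1) * d (k + 1) * t ^ k) := tsum_mul_left.symm
    _ ≤ ∑' k : ℕ, (d (k + 1) * μ ^ (k + 1) - d (k + 1) * t ^ (k + 1)) :=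
        (hsum.mul_left _).tsum_le_tsum (fun k => by
          have := mul_le_mul_of_nonneg_left (sub_mul_pow_le_pow_sub_pow ht htμ k) (hdnn (k + 1))
          linarith) ((summable_nat_add_iff 1).2 hdiff)
    _ = ∑' k, (d k * μ ^ k - d k * t ^ k) := by simp [hdiff.tsum_eq_zero_add]
    _ = genFun d μ - genFun d t := hsμ.tsum_sub hst

lemma exists_sub_lt_genFun_sub (hdnn : ∀ k, 0 ≤ d k) (hdsum : Summable d) {μ : ℝ}
    (hμ : μ ∈ Ioc 0 1) (hderiv : 1 < genFunDeriv d μ) :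
    ∃ t ∈ Ico 0 μ, μ - t < genFun d μ - genFun d t := by
  have hsum : Summable fun k : ℕ => ((k : ℝ) + 1) * d (k + 1) * μ ^ k := by
    by_contra h
    rw [genFunDeriv, tsum_eq_zero_of_not_summable h] at hderiv
    exact absurd hderiv zero_lt_one.not_gt
  have hlim : Tendsto (genFunDeriv d) (𝓝[<] μ) (𝓝 (genFunDeriv d μ)) := by
    rw [← nhdsWithin_Ico_eq_nhdsLT hμ.1]
    exact ((genFunDeriv_continuousOn hdnn hsum) μ (right_mem_Icc.2 hμ.1.le)).mono
      Ico_subset_Icc_self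
  obtain ⟨t, hderiv_t, ht⟩ :=
    ((hlim.eventually (lt_mem_nhds hderiv)).and (Ico_mem_nhdsLT hμ.1)).exists
  refine ⟨t, ht, ?_⟩
  have hsum_t : Summable fun k : ℕ => ((k : ℝ) + 1) * d (k + 1) * t ^ k :=
    hsum.of_nonneg_of_le
      (fun k => mul_nonneg (mul_nonneg k.cast_add_one_pos.le (hdnn _)) (pow_nonneg ht.1 k))
      fun k => mul_le_mul_of_nonneg_left (pow_le_pow_left₀ ht.1 ht.2.le k)
        (mul_nonneg k.cast_add_one_pos.le (hdnn _))
  calc μ - t < (μ - t) * genFunDeriv d t := lt_mul_of_one_lt_right (sub_pos.2 ht.2) hderiv_t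
    _ ≤ genFun d μ - genFun d t := sub_mul_genFunDeriv_le hdnn hdsum ht.1 ht.2.le hμ.2 hsum_t

end GenFun

/-- in the unstable case `H'(μ¹) > 1`, with `μ²` the lesser root in `[0,1]` of
`H(x) - x = 1 - 2μ¹` (so `μ² < μ¹`), the recursion `x_{k+1} = 1 - 2H(μ¹) + H(x_k)
= 2μ¹ - 1 + H(x_k)` converges to `μ²` from every starting point `x₀ ∈ [0, μ¹)`. -/
theorem second_moment_recursion_converges (d : ℕ → ℝ) (hd0 : d 0 = 0) (hdnn : ∀ k, 0 ≤ d k)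
    (hdsum : Summable d) (hdle : ∑' k, d k ≤ 1)
    (hconv : ∃ k : ℕ, 2 ≤ k ∧ 0 < d k)
    (μ1 : ℝ) (hμ1 : μ1 ∈ Set.Ioo (0 : ℝ) 1) (hroot : genFun d μ1 + μ1 = 1)
    (hunstable : 1 < genFunDeriv d μ1)
    (μ2 : ℝ) (hμ2 : IsLeast {x ∈ Set.Icc (0 : ℝ) 1 | genFun d x - x = 1 - 2 * μ1} μ2) :
    μ2 < μ1 ∧
    ∀ x : ℕ → ℝ, x 0 ∈ Set.Ico (0 : ℝ) μ1 →
      (∀ k, x (k + 1) = 2 * μ1 - 1 + genFun d (x k)) →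
      Tendsto x atTop (nhds μ2) := by
  obtain ⟨⟨hμ2mem, hμ2eq⟩, hμ2least⟩ := hμ2
  have hμ1mem : μ1 ∈ Icc (0 : ℝ) 1 := Ioo_subset_Icc_self hμ1
  have hμ1eq : genFun d μ1 - μ1 = 1 - 2 * μ1 := by linarith
  have hψ : StrictConvexOn ℝ (Icc 0 1) fun t => genFun d t - t :=
    (genFun_strictConvexOn hdnn hdsum hconv).sub_concaveOn (concaveOn_id (convex_Icc 0 1))
  have hlt : μ2 < μ1 := by
    obtain ⟨t, ht, hslope⟩ :=
      exists_sub_lt_genFun_sub hdnn hdsum (Ioo_subset_Ioc_self hμ1) hunstable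
    have htI : Icc 0 t ⊆ Icc (0 : ℝ) 1 := Icc_subset_Icc_right (ht.2.le.trans hμ1mem.2)
    have hhalf := genFun_lt_self hd0 hdnn hdsum hdle hconv hμ1
    obtain ⟨r, hr, hψr⟩ := intermediate_value_Icc' ht.1
      (((genFun_continuousOn hdnn hdsum).sub continuousOn_id).mono htI)
      (show 1 - 2 * μ1 ∈ Icc (genFun d t - t) (genFun d 0 - 0) by
        rw [genFun_zero hd0]
        constructor <;> linarith)
    exact (hμ2least ⟨htI hr, hψr⟩).trans_lt (hr.2.trans_lt ht.2)
  refine ⟨hlt, fun x hx0 hx => ?_⟩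
  have hmono : MonotoneOn (fun t => 2 * μ1 - 1 + genFun d t) (Icc 0 1) :=
    fun a ha b hb hab => add_le_add_right (genFun_monotoneOn hdnn hdsum ha hb hab) _
  have hcont : ContinuousOn (fun t => 2 * μ1 - 1 + genFun d t) (Icc 0 1) :=
    continuousOn_const.add (genFun_continuousOn hdnn hdsum)
  have hfix : 2 * μ1 - 1 + genFun d μ2 = μ2 := by linarith
  rcases le_or_gt (x 0) μ2 with h | h
  · have hI : Icc 0 μ2 ⊆ Icc (0 : ℝ) 1 := Icc_subset_Icc_right hμ2mem.2
    refine tendsto_orbit_of_lt_map (hmono.mono hI) (hcont.mono hI) hfix (fun t ht => ?_)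
      ⟨hx0.1, h⟩ hx
    have := hψ.map_lt_of_lt_of_map_eq (Ico_subset_Icc_self.trans hI ht) hμ1mem ht.2 hlt
      (hμ2eq.trans hμ1eq.symm)
    linarith
  · have hI : Icc μ2 (x 0) ⊆ Icc (0 : ℝ) 1 := Icc_subset_Icc hμ2mem.1 (hx0.2.le.trans hμ1mem.2)
    refine tendsto_orbit_of_map_lt (hmono.mono hI) (hcont.mono hI) hfix (fun t ht => ?_)
      ⟨h.le, le_rfl⟩ hx
    have := hψ.map_lt_of_mem_Ioo_of_map_eq hμ2mem hμ1mem (hμ2eq.trans hμ1eq.symm)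
      ⟨ht.1, ht.2.trans_lt hx0.2⟩
    linarith
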